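/- The program NQUEENS is complete w.r.t. the specification S⁰ = S_pq ∪ S⁰_pqs ∪ { pqs(0,cs,us,ds) : cs,us,ds ground }: every atom of S⁰ belongs to the least Herbrand model of NQUEENS. -/

import Mathlib

/-- Ground terms of the Herbrand universe: numerals built from `zero`/`succ`,
list constructors `cons`/`nil`, and infinitely many other constants `sym n`. -/
inductive Term : Type
  | zero : Term
  | succ : Term → Term
  | cons : Term → Term → Term
  | nil  : Term
  | sym  : ℕ → Term
deriving DecidableEq

/-- The numeral `sⁱ(0)` representing a natural number. -/
def num : ℕ → Term
  | 0 => Term.zero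
  | n + 1 => Term.succ (num n)

/-- `NthMember k e t` : `e` is the `k`-th member (k ≥ 1) of the term `t`,
i.e. `t = [e₁,…,e_{k-1}, e | t']`. -/
def NthMember : ℕ → Term → Term → Prop
  | 0, _, _ => False
  | 1, e, t => ∃ r, t = Term.cons e r
  | k + 2, e, t => ∃ h r, t = Term.cons h r ∧ NthMember (k + 1) e r

/-- `e` is a member of the term `t`. -/
def IsMember (e t : Term) : Prop := ∃ k, NthMember k e t

/-- `t` is a (proper, nil-terminated) list. -/
inductive IsList : Term → Prop
  | nil : IsList Term.nil
  | cons (h t : Term) : IsList t → IsList (Term.cons h t)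

/-- The members of `cs` are pairwise distinct (no member occurs at two positions). -/
def DistinctMembers (cs : Term) : Prop :=
  ∀ k1 k2 e, NthMember k1 e cs → NthMember k2 e cs → k1 = k2

/-- `(cs,us,ds)` represents a correct placement of queens `1,…,m`
in the context of row `i` (Definition 3 of the paper):
`cs` is a list of distinct members containing `1,…,m`; the up diagonal
numbers `k+j-i` and down diagonal numbers `k+i-j` of the queens `1,…,m`
(queen `j` being the `k`-th member of `cs`) are pairwise distinct; and every
positive such diagonal number `l` of queen `j` is reflected by `j` being the
`l`-th member of `us` (resp. `ds`). -/
def CorrectUpTo (m i : ℕ) (cs us ds : Term) : Prop :=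
  m ≤ i ∧
  IsList cs ∧ DistinctMembers cs ∧
  (∀ j, 1 ≤ j → j ≤ m → IsMember (num j) cs) ∧
  (∀ j1 j2 k1 k2, 1 ≤ j1 → j1 ≤ m → 1 ≤ j2 → j2 ≤ m →
     NthMember k1 (num j1) cs → NthMember k2 (num j2) cs →
     (k1 + j1 : ℤ) - i = (k2 + j2 : ℤ) - i → j1 = j2) ∧
  (∀ j1 j2 k1 k2, 1 ≤ j1 → j1 ≤ m → 1 ≤ j2 → j2 ≤ m →
     NthMember k1 (num j1) cs → NthMember k2 (num j2) cs →
     (k1 + i : ℤ) - j1 = (k2 + i : ℤ) - j2 → j1 = j2) ∧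
  (∀ j k (l : ℤ), 1 ≤ j → j ≤ m → NthMember k (num j) cs →
     (k + j : ℤ) - i = l → 0 < l → NthMember l.toNat (num j) us) ∧
  (∀ j k (l : ℤ), 1 ≤ j → j ≤ m → NthMember k (num j) cs →
     (k + i : ℤ) - j = l → 0 < l → NthMember l.toNat (num j) ds)

/-- Ground atoms of the n-queens program. -/
inductive Atom : Type
  | pq  (i cs us ds : Term)
  | pqs (i cs us ds : Term)
deriving DecidableEq

/-- A ground clause: a head together with the list of body atoms. -/
abbrev Clause := Atom × List Atom

/-- A (ground instantiation of a) definite program. -/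
abbrev Program := Set Clause

/-- `S` is an Herbrand model of `P`. -/
def IsModel (S : Set Atom) (P : Program) : Prop :=
  ∀ c ∈ P, (∀ b ∈ c.2, b ∈ S) → c.1 ∈ S

/-- The least Herbrand model of `P`. -/
def LHM (P : Program) : Set Atom := ⋂₀ {S | IsModel S P}

/-- A ground atom `A` is covered by program `P` w.r.t. specification `S`. -/
def Covered (P : Program) (S : Set Atom) (A : Atom) : Prop :=
  ∃ c ∈ P, c.1 = A ∧ ∀ b ∈ c.2, b ∈ S

/-- The set of ground instances of the two pq clauses:
`pq(I,[I|_],[I|_],[I|_])` and `pq(I,[_|Cs],[_|Us],[_|Ds]) ← pq(I,Cs,Us,Ds)`. -/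
def PQprog : Program :=
  {c | (∃ i x y z, c = (Atom.pq i (Term.cons i x) (Term.cons i y) (Term.cons i z), [])) ∨
       (∃ i c' cs u us d ds,
          c = (Atom.pq i (Term.cons c' cs) (Term.cons u us) (Term.cons d ds),
               [Atom.pq i cs us ds]))}

/-- The set of ground instances of the four clauses of NQUEENS. -/
def NQprog : Program :=
  {c | (∃ x y z, c = (Atom.pqs Term.zero x y z, [])) ∨
       (∃ i cs us u d ds,
          c = (Atom.pqs (Term.succ i) cs us (Term.cons d ds),
               [Atom.pqs i cs (Term.cons u us) ds, Atom.pq (Term.succ i) cs us ds])) ∨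
       (∃ i x y z, c = (Atom.pq i (Term.cons i x) (Term.cons i y) (Term.cons i z), [])) ∨
       (∃ i c' cs u us d ds,
          c = (Atom.pq i (Term.cons c' cs) (Term.cons u us) (Term.cons d ds),
               [Atom.pq i cs us ds]))}

/-- The specification `S_pq`. -/
def Spq : Set Atom :=
  {a | ∃ i cs us ds k, a = Atom.pq i cs us ds ∧ 0 < k ∧
       NthMember k i cs ∧ NthMember k i us ∧ NthMember k i ds}

/-- The correctness specification `S_pqs`. -/
def Spqs : Set Atom :=
  {a | (∃ cs us ds, a = Atom.pqs Term.zero cs us ds) ∨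
       (∃ i cs us t ds, 0 < i ∧ a = Atom.pqs (num i) cs us (Term.cons t ds) ∧
          (∀ j, 1 ≤ j → j ≤ i → IsMember (num j) cs) ∧
          (IsList cs → DistinctMembers cs → CorrectUpTo i i cs us ds))}

/-- The completeness specification `S⁰_pqs`. -/
def S0pqs : Set Atom :=
  {a | ∃ i cs us t ds, 0 < i ∧ a = Atom.pqs (num i) cs us (Term.cons t ds) ∧
        CorrectUpTo i i cs us ds}

/-- All atoms `pqs(0,cs,us,ds)`. -/
def SpqsZero : Set Atom :=
  {a | ∃ cs us ds, a = Atom.pqs Term.zero cs us ds}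

/-- The level mapping on ground terms: `|[h|t]| = 1+|t|`, `|s(t)| = 1+|t|`,
`|f(…)| = 0` otherwise. -/
def tlvl : Term → ℕ
  | Term.cons _ t => 1 + tlvl t
  | Term.succ t => 1 + tlvl t
  | _ => 0

/-- The level mapping on ground atoms. -/
def alvl : Atom → ℕ
  | Atom.pqs i cs _ _ => tlvl i + tlvl cs
  | Atom.pq _ cs _ _ => tlvl cs

/-- `t` is a list of length `n`. -/
inductive IsListLen : Term → ℕ → Prop
  | nil : IsListLen Term.nil 0
  | cons (h t : Term) (n : ℕ) : IsListLen t n → IsListLen (Term.cons h t) (n + 1)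
/-! The `pq` atoms are derived by walking down the three lists to the common position of `i`.
For `pqs`, induct on the row `i`: in a correct placement queen `i` sits at some position `k` of
`cs` with both diagonal numbers equal to `k`, which gives the `pq` body atom and makes `ds` a
nonempty list; passing to row `i - 1` keeps the placement correct for `cs`, `[u | us]` and the
tail of `ds`, where `u` is the queen (if any) whose up diagonal number becomes `1`, and the
distinctness of up diagonals makes that queen unique. -/

lemma mem_LHM {P : Program} {A : Atom} : A ∈ LHM P ↔ ∀ S, IsModel S P → A ∈ S :=
  Set.mem_sInter

lemma isModel_LHM (P : Program) : IsModel (LHM P) P := fun c hc hbody =>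
  mem_LHM.2 fun S hS => hS c hc fun b hb => mem_LHM.1 (hbody b hb) S hS

lemma LHM_mono {P Q : Program} (hPQ : P ⊆ Q) : LHM P ⊆ LHM Q :=
  Set.sInter_subset_sInter fun _ hS c hc => hS c (hPQ hc)

lemma PQprog_subset_NQprog : PQprog ⊆ NQprog := fun _ hc => Or.inr (Or.inr hc)

section NthMember

variable {k n : ℕ} {e h t : Term}

lemma NthMember.one_le (he : NthMember k e t) : 1 ≤ k := by
  cases k
  · exact he.elim
  · omega

lemma NthMember.exists_eq_cons (he : NthMember k e t) : ∃ h r, t = Term.cons h r := by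
  match k, he with
  | 1, ⟨r, ht⟩ => exact ⟨e, r, ht⟩
  | _ + 2, ⟨h, r, ht, _⟩ => exact ⟨h, r, ht⟩

lemma nthMember_one_cons : NthMember 1 e (Term.cons e t) := ⟨t, rfl⟩

lemma nthMember_succ_cons (hn : 1 ≤ n) :
    NthMember (n + 1) e (Term.cons h t) ↔ NthMember n e t := by
  obtain ⟨n, rfl⟩ : ∃ m, n = m + 1 := ⟨n - 1, by omega⟩
  constructor
  · rintro ⟨_, _, heq, hn⟩
    cases heq
    exact hn
  · exact fun hn => ⟨h, t, rfl, hn⟩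

end NthMember

lemma pq_mem_LHM_PQprog {i : Term} :
    ∀ {k : ℕ} {cs us ds : Term}, NthMember k i cs → NthMember k i us → NthMember k i ds →
      Atom.pq i cs us ds ∈ LHM PQprog
  | 1, _, _, _, ⟨x, hx⟩, ⟨y, hy⟩, ⟨z, hz⟩ => by
    subst hx hy hz
    exact isModel_LHM PQprog _ (Or.inl ⟨i, x, y, z, rfl⟩) (by simp)
  | _ + 2, _, _, _, ⟨c, cs, hc, hcs⟩, ⟨u, us, hu, hus⟩, ⟨d, ds, hd, hds⟩ => by
    subst hc hu hd
    refine isModel_LHM PQprog _ (Or.inr ⟨i, c, cs, u, us, d, ds, rfl⟩) ?_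
    simpa using pq_mem_LHM_PQprog hcs hus hds

namespace CorrectUpTo

variable {m i : ℕ} {cs us ds : Term}

lemma mono (h : CorrectUpTo m i cs us ds) {m' : ℕ} (hm : m' ≤ m) :
    CorrectUpTo m' i cs us ds := by
  obtain ⟨hmi, hlist, hdist, hmem, hup, hdown, hus, hds⟩ := h
  refine ⟨hmi.trans' hm, hlist, hdist, fun j h1 h2 => hmem j h1 (h2.trans hm), ?_, ?_, ?_, ?_⟩
  · exact fun j1 j2 k1 k2 h1 h2 h3 h4 => hup j1 j2 k1 k2 h1 (h2.trans hm) h3 (h4.trans hm)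
  · exact fun j1 j2 k1 k2 h1 h2 h3 h4 => hdown j1 j2 k1 k2 h1 (h2.trans hm) h3 (h4.trans hm)
  · exact fun j k l h1 h2 => hus j k l h1 (h2.trans hm)
  · exact fun j k l h1 h2 => hds j k l h1 (h2.trans hm)

lemma nthMember_self (h : CorrectUpTo i i cs us ds) (hi : 1 ≤ i) :
    ∃ k, NthMember k (num i) cs ∧ NthMember k (num i) us ∧ NthMember k (num i) ds := by
  obtain ⟨-, -, -, hmem, -, -, hus, hds⟩ := h
  obtain ⟨k, hk⟩ := hmem i hi le_rfl
  have hpos : (0 : ℤ) < k := by exact_mod_cast hk.one_le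
  exact ⟨k, hk, by simpa using hus i k k hi le_rfl hk (by ring) hpos,
    by simpa using hds i k k hi le_rfl hk (by ring) hpos⟩

lemma exists_up_head (h : CorrectUpTo m (i + 1) cs us ds) :
    ∃ u, ∀ j k, 1 ≤ j → j ≤ m → NthMember k (num j) cs → k + j = i + 1 → u = num j := by
  obtain ⟨-, -, -, -, hup, -⟩ := h
  by_cases hex : ∃ j k, 1 ≤ j ∧ j ≤ m ∧ NthMember k (num j) cs ∧ k + j = i + 1
  · obtain ⟨j₀, k₀, h₁, h₂, hk₀, hsum₀⟩ := hex
    refine ⟨num j₀, fun j k h1 h2 hk hsum => ?_⟩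
    rw [hup j₀ j k₀ k h₁ h₂ h1 h2 hk₀ hk (by omega)]
  · exact ⟨Term.nil, fun j k h1 h2 hk hsum => (hex ⟨j, k, h1, h2, hk, hsum⟩).elim⟩

lemma pred_row {d : Term} (h : CorrectUpTo m (i + 1) cs us (Term.cons d ds)) (hm : m ≤ i) :
    ∃ u, CorrectUpTo m i cs (Term.cons u us) ds := by
  obtain ⟨u, hu⟩ := h.exists_up_head
  obtain ⟨-, hlist, hdist, hmem, hup, hdown, hus, hds⟩ := h
  refine ⟨u, hm, hlist, hdist, hmem, ?_, ?_, ?_, ?_⟩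
  · exact fun j1 j2 k1 k2 h1 h2 h3 h4 hk1 hk2 heq =>
      hup j1 j2 k1 k2 h1 h2 h3 h4 hk1 hk2 (by push_cast at heq ⊢; omega)
  · exact fun j1 j2 k1 k2 h1 h2 h3 h4 hk1 hk2 heq =>
      hdown j1 j2 k1 k2 h1 h2 h3 h4 hk1 hk2 (by push_cast at heq ⊢; omega)
  · intro j k l h1 h2 hk hl hlpos
    rcases eq_or_lt_of_le (show 1 ≤ l by omega) with rfl | hl1
    · rw [hu j k h1 h2 hk (by omega)]
      exact nthMember_one_cons
    · have hold := hus j k (l - 1) h1 h2 hk (by push_cast; omega) (by omega)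
      rwa [show l.toNat = (l - 1).toNat + 1 by omega, nthMember_succ_cons (by omega)]
  · intro j k l h1 h2 hk hl hlpos
    have hold := hds j k (l + 1) h1 h2 hk (by push_cast; omega) (by omega)
    rwa [show (l + 1).toNat = l.toNat + 1 by omega, nthMember_succ_cons (by omega)] at hold

end CorrectUpTo

lemma pqs_mem_LHM_of_correctUpTo :
    ∀ {i : ℕ} {cs us ds : Term}, CorrectUpTo i i cs us ds → ∀ t,
      Atom.pqs (num i) cs us (Term.cons t ds) ∈ LHM NQprog
  | 0, cs, us, ds, _, t =>
    isModel_LHM NQprog _ (Or.inl ⟨cs, us, Term.cons t ds, rfl⟩) (by simp)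
  | m + 1, cs, us, ds, h, t => by
    obtain ⟨k, hcs, hus, hds⟩ := h.nthMember_self (by omega)
    obtain ⟨d, ds', rfl⟩ := hds.exists_eq_cons
    obtain ⟨u, hpred⟩ := (h.mono m.le_succ).pred_row le_rfl
    refine isModel_LHM NQprog _ (Or.inr (Or.inl ⟨num m, cs, us, u, t, _, rfl⟩)) ?_
    simp only [List.mem_cons, List.not_mem_nil, or_false, forall_eq_or_imp, forall_eq]
    exact ⟨pqs_mem_LHM_of_correctUpTo hpred d,
      LHM_mono PQprog_subset_NQprog (pq_mem_LHM_PQprog hcs hus hds)⟩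

/-- Completeness of NQUEENS w.r.t. `S⁰ = S_pq ∪ S⁰_pqs ∪ { pqs(0,cs,us,ds) }`:
every atom of `S⁰` belongs to the least Herbrand model of NQUEENS. -/
theorem nqueens_complete : Spq ∪ S0pqs ∪ SpqsZero ⊆ LHM NQprog := by
  rintro A ((⟨i, cs, us, ds, k, rfl, -, hcs, hus, hds⟩ | ⟨i, cs, us, t, ds, -, rfl, h⟩) |
    ⟨cs, us, ds, rfl⟩)
  · exact LHM_mono PQprog_subset_NQprog (pq_mem_LHM_PQprog hcs hus hds)
  · exact pqs_mem_LHM_of_correctUpTo h t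
  · exact isModel_LHM NQprog _ (Or.inl ⟨cs, us, ds, rfl⟩) (by simp)
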